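/- Let (X_n) be an increasing sequence of nonempty finite sets with union X, let ~ be an equivalence relation on X, and suppose limsup_{n→∞} (number of ~-classes meeting X_n)^{1/n} ≤ α < β ≤ liminf_{n→∞} (#X_n)^{1/n} for some reals 1 ≤ α < β. Let Y ⊆ X be a set of elements whose ~-equivalence class is a singleton (i.e. elements detected by any invariant constant on ~-classes). Then Y has asymptotic density zero in X: lim_{n→∞} #(Y ∩ X_n)/#X_n = 0. -/

import Mathlib

/-!
Elements with singleton `~`-class are sent injectively to their classes, so `#(Y ∩ X_n)` is at
most the number of classes meeting `X_n`, which is eventually below `γ ^ n` for any `γ > α`,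
while `#X_n` eventually exceeds `δ ^ n` for any `δ < β`. Taking `α < γ < δ < β`, the density
is at most `(γ / δ) ^ n → 0`.
-/

open Filter Topology

theorem Setoid.ncard_inter_le_ncard_image_mk {E : Type*} {s : Setoid E} {S Y : Set E}
    (hS : S.Finite) (hY : ∀ x ∈ Y, ∀ x' ∈ S, s.r x x' → x' = x) :
    (Y ∩ S).ncard ≤ (Quotient.mk s '' S).ncard := by
  have hinj : Set.InjOn (Quotient.mk s) (Y ∩ S) := fun a ha b hb hab =>
    (hY a ha.1 b hb.2 (Quotient.eq.mp hab)).symm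
  rw [← hinj.ncard_image]
  exact Set.ncard_le_ncard (Set.image_mono Set.inter_subset_right) (hS.image _)

section RootGrowth

variable {u : ℕ → ℝ}

theorem eventually_le_pow_of_limsup_rpow_lt (hu : 0 ≤ u) {γ : ℝ}
    (h : limsup (fun n : ℕ => ((u n ^ (1 / (n : ℝ)) : ℝ) : EReal)) atTop < γ) :
    ∀ᶠ n in atTop, u n ≤ γ ^ n := by
  filter_upwards [eventually_lt_of_limsup_lt h, eventually_ne_atTop 0] with n hn hn0
  rw [← Real.rpow_inv_natCast_pow (hu n) hn0, ← one_div]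
  exact pow_le_pow_left₀ (Real.rpow_nonneg (hu n) _) (EReal.coe_lt_coe_iff.mp hn).le n

theorem eventually_pow_le_of_lt_liminf_rpow (hu : 0 ≤ u) {δ : ℝ} (hδ : 0 ≤ δ)
    (h : δ < liminf (fun n : ℕ => ((u n ^ (1 / (n : ℝ)) : ℝ) : EReal)) atTop) :
    ∀ᶠ n in atTop, δ ^ n ≤ u n := by
  filter_upwards [eventually_lt_of_lt_liminf h, eventually_ne_atTop 0] with n hn hn0
  rw [← Real.rpow_inv_natCast_pow (hu n) hn0, ← one_div]
  exact pow_le_pow_left₀ hδ (EReal.coe_lt_coe_iff.mp hn).le n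

theorem tendsto_div_zero_of_limsup_rpow_lt_liminf_rpow {v : ℕ → ℝ} (hu : 0 ≤ u) (hv : 0 ≤ v)
    (h : limsup (fun n : ℕ => ((u n ^ (1 / (n : ℝ)) : ℝ) : EReal)) atTop
      < liminf (fun n : ℕ => ((v n ^ (1 / (n : ℝ)) : ℝ) : EReal)) atTop) :
    Tendsto (fun n => u n / v n) atTop (𝓝 0) := by
  obtain ⟨γ, hγ, hγv⟩ := EReal.lt_iff_exists_real_btwn.mp h
  obtain ⟨δ, hγδ, hδ⟩ := EReal.lt_iff_exists_real_btwn.mp hγv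
  have hγδ : γ < δ := EReal.coe_lt_coe_iff.mp hγδ
  -- `γ` bounds the nonnegative roots `u n ^ (1 / n)` eventually, so it is positive.
  have hγ0 : 0 < γ := by
    obtain ⟨n, hn⟩ := (eventually_lt_of_limsup_lt hγ).exists
    exact (Real.rpow_nonneg (hu n) _).trans_lt (EReal.coe_lt_coe_iff.mp hn)
  have hδ0 : 0 < δ := hγ0.trans hγδ
  have hbound : ∀ᶠ n in atTop, u n / v n ≤ (γ / δ) ^ n := by
    filter_upwards [eventually_le_pow_of_limsup_rpow_lt hu hγ,
      eventually_pow_le_of_lt_liminf_rpow hv hδ0.le hδ] with n hun hvn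
    rw [div_pow]
    exact div_le_div₀ (pow_nonneg hγ0.le n) hun (pow_pos hδ0 n) hvn
  exact squeeze_zero' (Eventually.of_forall fun n => div_nonneg (hu n) (hv n)) hbound
    (tendsto_pow_atTop_nhds_zero_of_lt_one (div_nonneg hγ0.le hδ0.le)
      ((div_lt_one hδ0).mpr hγδ))

end RootGrowth

theorem stmt_19_general {E : Type*} (X : ℕ → Set E) (hfin : ∀ n, (X n).Finite)
    (s : Setoid E) (α β : ℝ) (hαβ : α < β)
    (hcl : limsup
      (fun n : ℕ => (((((Quotient.mk s) '' X n).ncard : ℝ) ^ (1 / (n : ℝ)) : ℝ) : EReal))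
      atTop ≤ (α : EReal))
    (hX : (β : EReal)
      ≤ liminf (fun n : ℕ => ((((X n).ncard : ℝ) ^ (1 / (n : ℝ)) : ℝ) : EReal)) atTop)
    (Y : Set E)
    (hsing : ∀ x ∈ Y, ∀ x' ∈ ⋃ n, X n, s.r x x' → x' = x) :
    Tendsto (fun n : ℕ => ((Y ∩ X n).ncard : ℝ) / ((X n).ncard : ℝ)) atTop (nhds 0) := by
  have hclasses : Tendsto
      (fun n => (((Quotient.mk s) '' X n).ncard : ℝ) / ((X n).ncard : ℝ)) atTop (𝓝 0) :=
    tendsto_div_zero_of_limsup_rpow_lt_liminf_rpow (fun _ => Nat.cast_nonneg _)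
      (fun _ => Nat.cast_nonneg _) (hcl.trans_lt ((EReal.coe_lt_coe_iff.mpr hαβ).trans_le hX))
  refine squeeze_zero (fun n => by positivity) (fun n => ?_) hclasses
  have hcount := Setoid.ncard_inter_le_ncard_image_mk (hfin n)
    fun x hx x' hx' => hsing x hx x' (Set.mem_iUnion_of_mem n hx')
  gcongr

/-- With `(X_n)` increasing nonempty finite sets with union `X`, `~` an
equivalence relation with `limsup (#classes meeting X_n)^{1/n} ≤ α < β ≤
liminf (#X_n)^{1/n}` for reals `1 ≤ α < β`, any set `Y ⊆ X` of elements whose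
`~`-class is a singleton has asymptotic density zero in `X`. -/
theorem stmt_19 {E : Type*} (X : ℕ → Set E) (hfin : ∀ n, (X n).Finite)
    (hne : ∀ n, (X n).Nonempty) (hmono : ∀ n, X n ⊆ X (n + 1))
    (s : Setoid E) (α β : ℝ) (hα : 1 ≤ α) (hαβ : α < β)
    (hcl : limsup
      (fun n : ℕ => (((((Quotient.mk s) '' X n).ncard : ℝ) ^ (1 / (n : ℝ)) : ℝ) : EReal))
      atTop ≤ (α : EReal))
    (hX : (β : EReal)
      ≤ liminf (fun n : ℕ => ((((X n).ncard : ℝ) ^ (1 / (n : ℝ)) : ℝ) : EReal)) atTop)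
    (Y : Set E) (hY : Y ⊆ ⋃ n, X n)
    (hsing : ∀ x ∈ Y, ∀ x' ∈ ⋃ n, X n, s.r x x' → x' = x) :
    Tendsto (fun n : ℕ => ((Y ∩ X n).ncard : ℝ) / ((X n).ncard : ℝ)) atTop (nhds 0) :=
  stmt_19_general X hfin s α β hαβ hcl hX Y hsing
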